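/- arXiv:2101.02063 — 2 statements merged into one kernel-verified Lean document; each statement's English description precedes it below -/
import Mathlib

section
/- Let p, q, r, s, n be natural numbers with n = p + q = r + s. Let A be the n×n complex diagonal matrix with A_jj = 1 for j < p and A_jj = −1 for p ≤ j < n, and B the n×n complex diagonal matrix with B_kk = 1 for k < r and B_kk = −1 for r ≤ k < n. Let σ be a permutation of Fin n and X : Fin n → ℝ, and let Y be the n×n diagonal matrix with Y_{kk} = i·X_k. For w : Fin n → ℂ let M(w) be the n×n complex matrix with M(w)_{j,k} = w_j if k = σ(j) and 0 otherwise, and define Q(w) = Im( tr( B · M(w)^* · A · M(w) · Y ) ). Then Q(w) > 0 for every w ≠ 0 if and only if for every j ∈ Fin n one has X_{σ(j)} > 0 when ((j < p and σ(j) < r) or (j ≥ p and σ(j) ≥ r)), and X_{σ(j)} < 0 otherwise. -/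
private lemma MHAM_diag (n p : ℕ) (σ : Equiv.Perm (Fin n)) (w : Fin n → ℂ) :
    (Matrix.of fun j k : Fin n => if k = σ j then w j else 0).conjTranspose *
      (Matrix.diagonal fun j : Fin n => if (j : ℕ) < p then (1:ℂ) else -1) *
      (Matrix.of fun j k : Fin n => if k = σ j then w j else 0)
    = Matrix.diagonal (fun k => (Complex.normSq (w (σ.symm k)) : ℂ) *
        (if ((σ.symm k : ℕ) < p) then 1 else -1)) := by
  ext k l
  rw [Matrix.mul_assoc]
  simp only [Matrix.mul_apply, Matrix.conjTranspose_apply, Matrix.of_apply,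
    Matrix.diagonal_apply, ite_mul, mul_ite, zero_mul, mul_zero,
    Finset.sum_ite_eq, Finset.mem_univ, if_true, apply_ite (star : ℂ → ℂ), star_zero,
    ← Equiv.symm_apply_eq, eq_comm (a := σ.symm k)]
  simp only [Equiv.symm_symm, Equiv.apply_eq_iff_eq_symm_apply, ite_mul, zero_mul]
  rw [show ∀ f : Fin n → ℂ, (∑ x : Fin n, if x = σ.symm l then f x else 0) = f (σ.symm l)
    from fun f => by simp [Finset.sum_ite_eq']]
  by_cases h : k = l
  · simp only [h, if_pos rfl, Equiv.symm_apply_eq, Equiv.apply_symm_apply,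
      ← Complex.normSq_eq_conj_mul_self]
    split_ifs <;> simp [Complex.star_def, ← Complex.normSq_eq_conj_mul_self]
  · simp [h, show ¬ l = k from fun hh => h hh.symm, Equiv.symm_apply_eq]

/-- Lemma 6.6: the form `Q(w) = ⟨y·σ(w), σ(w)⟩` is positive definite on the
σ-translate of `W^𝔥` if and only if `y = (iX_1, …, iX_n)` satisfies the displayed
sign conditions (description of the cone `Γ_{σ,∅}`). -/
theorem pos_def_iff_sign_conditions (p q r s n : ℕ) (hpq : n = p + q) (hrs : n = r + s)
    (σ : Equiv.Perm (Fin n)) (X : Fin n → ℝ)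
    (A B Y : Matrix (Fin n) (Fin n) ℂ)
    (hA : A = Matrix.diagonal fun j : Fin n => if (j : ℕ) < p then 1 else -1)
    (hB : B = Matrix.diagonal fun k : Fin n => if (k : ℕ) < r then 1 else -1)
    (hY : Y = Matrix.diagonal fun k : Fin n => Complex.I * (X k : ℂ))
    (M : (Fin n → ℂ) → Matrix (Fin n) (Fin n) ℂ)
    (hM : ∀ w, M w = Matrix.of fun j k : Fin n => if k = σ j then w j else 0)
    (Q : (Fin n → ℂ) → ℝ)
    (hQ : ∀ w, Q w = (Matrix.trace (B * (M w).conjTranspose * A * M w * Y)).im) :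
    (∀ w : Fin n → ℂ, w ≠ 0 → 0 < Q w) ↔
      ∀ j : Fin n,
        if ((j : ℕ) < p ∧ (σ j : ℕ) < r) ∨ (p ≤ (j : ℕ) ∧ r ≤ (σ j : ℕ))
        then 0 < X (σ j) else X (σ j) < 0 := by
  classical
  have key : ∀ w : Fin n → ℂ, Q w =
      ∑ j : Fin n, (if ((j:ℕ) < p ∧ (σ j : ℕ) < r) ∨ (p ≤ (j:ℕ) ∧ r ≤ (σ j : ℕ))
        then (1:ℝ) else -1) * (X (σ j) * Complex.normSq (w j)) := by
    intro w
    rw [hQ, hM, hA, hB, hY,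
      mul_assoc (Matrix.diagonal fun k : Fin n => if (k : ℕ) < r then (1:ℂ) else -1),
      mul_assoc (Matrix.diagonal fun k : Fin n => if (k : ℕ) < r then (1:ℂ) else -1),
      MHAM_diag n p σ w,
      Matrix.diagonal_mul_diagonal, Matrix.diagonal_mul_diagonal, Matrix.trace_diagonal]
    rw [Complex.im_sum]
    rw [← Equiv.sum_comp σ (fun k => (((if (k:ℕ) < r then (1:ℂ) else -1) *
      ((Complex.normSq (w (σ.symm k)) : ℂ) * (if ((σ.symm k : ℕ) < p) then 1 else -1)) *
      (Complex.I * (X k : ℂ))).im))]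
    refine Finset.sum_congr rfl fun j _ => ?_
    simp only [Equiv.symm_apply_apply]
    by_cases h1 : (j:ℕ) < p <;> by_cases h2 : ((σ j : ℕ)) < r
    · rw [if_pos h2, if_pos h1, if_pos (Or.inl ⟨h1, h2⟩)]
      simp [Complex.mul_im, Complex.mul_re]; ring
    · rw [if_neg h2, if_pos h1, if_neg (by omega)]
      simp [Complex.mul_im, Complex.mul_re]; ring
    · rw [if_pos h2, if_neg h1, if_neg (by omega)]
      simp [Complex.mul_im, Complex.mul_re]; ring
    · rw [if_neg h2, if_neg h1, if_pos (Or.inr ⟨by omega, by omega⟩)]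
      simp [Complex.mul_im, Complex.mul_re]; ring
  constructor
  · intro hpos j
    have hw : (Pi.single j 1 : Fin n → ℂ) ≠ 0 := by
      intro h
      have := congrFun h j
      simp at this
    have h := hpos _ hw
    rw [key] at h
    rw [show (∑ i : Fin n, (if ((i:ℕ) < p ∧ (σ i : ℕ) < r) ∨ (p ≤ (i:ℕ) ∧ r ≤ (σ i : ℕ))
        then (1:ℝ) else -1) * (X (σ i) * Complex.normSq ((Pi.single j 1 : Fin n → ℂ) i)))
        = (if ((j:ℕ) < p ∧ (σ j : ℕ) < r) ∨ (p ≤ (j:ℕ) ∧ r ≤ (σ j : ℕ))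
        then (1:ℝ) else -1) * (X (σ j)) from ?_] at h
    · split_ifs at h ⊢ with hc
      · linarith
      · linarith
    · rw [Finset.sum_eq_single j]
      · simp
      · intro b _ hb
        simp [Pi.single_apply, hb]
      · simp
  · intro hsign w hw
    rw [key w]
    obtain ⟨j0, hj0⟩ : ∃ j, w j ≠ 0 := by
      by_contra h
      push_neg at h
      exact hw (funext h)
    refine Finset.sum_pos' (fun i _ => ?_) ⟨j0, Finset.mem_univ _, ?_⟩
    · have := hsign i
      have hns := Complex.normSq_nonneg (w i)
      split_ifs at this ⊢ <;> nlinarith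
    · have := hsign j0
      have hns : 0 < Complex.normSq (w j0) := Complex.normSq_pos.2 hj0
      split_ifs at this ⊢ <;> nlinarith
end

section
/- Let r, s, k be natural numbers with k ≤ r and k ≤ s, and set n = r + s. Let θ, X : Fin k → ℝ with X_i ≠ 0 for all i, and t : Fin (n − 2k) → ℂ with ‖t_i‖ = 1 for all i. Define h : Fin n → ℂ by h_j = exp(iθ_j − X_j) for j < k, h_j = t_{j−k} for k ≤ j < n − k, and h_j = exp(iθ_{j−(n−k)} + X_{j−(n−k)}) for n − k ≤ j < n. Then the product P = ∏_{0 ≤ i < k} ∏_{k ≤ j < n−k} (1 − h_i · h_j⁻¹) · ∏_{k ≤ i < n−k} ∏_{n−k ≤ j < n} (1 − h_i · h_j⁻¹) is a real number and P > 0. -/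
/-!
After reindexing, both products run over the pairs `(a, m)` with `a < k`, `m < n - 2k`, with
factors `1 - uₐ / tₘ` and `1 - tₘ / vₐ`, where `uₐ = exp(iθₐ - Xₐ)` and `vₐ = exp(iθₐ + Xₐ)`.
Since `conj uₐ = vₐ⁻¹` and `conj tₘ⁻¹ = tₘ`, the second factor is the conjugate of the first, so
the product is `∏ |1 - uₐ / tₘ|²`; no factor vanishes because `|uₐ / tₘ| = exp(-Xₐ) ≠ 1`.
-/

open Finset Complex ComplexConjugate

theorem Fin.prod_filter_eq_prod_add {M : Type*} [CommMonoid M] {n : ℕ} (p : ℕ → Prop)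
    [DecidablePred p] (a c : ℕ) (hn : a + c ≤ n) (hp : ∀ j < n, p j ↔ a ≤ j ∧ j < a + c)
    (f : Fin n → M) :
    ∏ j ∈ univ.filter (fun j : Fin n => p j), f j = ∏ m : Fin c, f ⟨m + a, by omega⟩ := by
  symm
  refine prod_bij' (fun m _ => ⟨m + a, by omega⟩) (fun j hj => ⟨j - a, ?_⟩) ?_ ?_ ?_ ?_ ?_
  · have := (hp j j.isLt).1 (mem_filter.1 hj).2
    omega
  · intro m _
    simp only [mem_filter, mem_univ, true_and, hp (m + a) (by omega)]
    omega
  · simp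
  · intro m _
    ext
    simp
  · intro j hj
    have := (hp j j.isLt).1 (mem_filter.1 hj).2
    ext
    simp only
    omega
  · simp

theorem Complex.conj_exp_I_mul_sub (θ X : ℝ) :
    conj (exp (I * θ - X)) = (exp (I * θ + X))⁻¹ := by
  rw [← exp_conj, ← exp_neg]
  congr 1
  simp only [map_sub, map_mul, conj_I, conj_ofReal]
  ring

theorem Complex.norm_exp_I_mul_sub_ne_one {θ X : ℝ} (hX : X ≠ 0) :
    ‖exp (I * θ - X)‖ ≠ 1 := by
  rw [norm_exp]
  simpa using hX

theorem Complex.mul_one_sub_mul_conj_eq_normSq {w t : ℂ} (ht : ‖t‖ = 1) :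
    (1 - w * t⁻¹) * (1 - t * conj w) = normSq (1 - w * t⁻¹) := by
  have hconj : conj (1 - w * t⁻¹) = 1 - t * conj w := by
    rw [map_sub, map_one, map_mul, map_inv₀, ← inv_eq_conj ht, inv_inv, mul_comm]
  rw [← hconj, mul_conj]

theorem Complex.normSq_one_sub_mul_inv_pos {w t : ℂ} (hw : ‖w‖ ≠ 1) (ht : ‖t‖ = 1) :
    0 < normSq (1 - w * t⁻¹) := by
  refine normSq_pos.2 fun h => hw ?_
  rw [sub_eq_zero, eq_comm, mul_inv_eq_one₀ (norm_ne_zero_iff.1 (by simp [ht]))] at h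
  rw [h, ht]

/-- For a regular element `h` of the Cartan subgroup `H'_{S_k}` of `U(r,s)`, the
determinant `det(Id − Ad(h))_{η'(S_k)} = ∏ (1 − h^{−α})` over the roots of the
nilradical is a positive real number (unnamed lemma of Section 6). -/
theorem det_nilradical_pos (r s k : ℕ) (hkr : k ≤ r) (hks : k ≤ s) (n : ℕ) (hn : n = r + s)
    (θ X : Fin k → ℝ) (hX : ∀ i, X i ≠ 0)
    (t : Fin (n - 2 * k) → ℂ) (ht : ∀ i, ‖t i‖ = 1)
    (h : Fin n → ℂ)
    (hh1 : ∀ j : Fin n, ∀ hj : (j : ℕ) < k,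
      h j = Complex.exp (Complex.I * (θ ⟨(j : ℕ), hj⟩ : ℂ) - (X ⟨(j : ℕ), hj⟩ : ℂ)))
    (hh2 : ∀ j : Fin n, ∀ (h1 : k ≤ (j : ℕ)) (h2 : (j : ℕ) < n - k),
      h j = t ⟨(j : ℕ) - k, by omega⟩)
    (hh3 : ∀ j : Fin n, ∀ h1 : n - k ≤ (j : ℕ),
      h j = Complex.exp (Complex.I * (θ ⟨(j : ℕ) - (n - k), by have := j.isLt; omega⟩ : ℂ)
        + (X ⟨(j : ℕ) - (n - k), by have := j.isLt; omega⟩ : ℂ))) :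
    ∃ c : ℝ, 0 < c ∧
      (∏ i ∈ Finset.univ.filter (fun i : Fin n => (i : ℕ) < k),
        ∏ j ∈ Finset.univ.filter (fun j : Fin n => k ≤ (j : ℕ) ∧ (j : ℕ) < n - k),
          (1 - h i * (h j)⁻¹)) *
      (∏ i ∈ Finset.univ.filter (fun i : Fin n => k ≤ (i : ℕ) ∧ (i : ℕ) < n - k),
        ∏ j ∈ Finset.univ.filter (fun j : Fin n => n - k ≤ (j : ℕ)),
          (1 - h i * (h j)⁻¹)) = (c : ℂ) := by
  have h2k : 2 * k ≤ n := by omega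
  have prod_middle (f : Fin n → ℂ) :
      ∏ j ∈ univ.filter (fun j : Fin n => k ≤ (j : ℕ) ∧ (j : ℕ) < n - k), f j =
        ∏ m : Fin (n - 2 * k), f ⟨m + k, by omega⟩ :=
    Fin.prod_filter_eq_prod_add (fun j => k ≤ j ∧ j < n - k) k (n - 2 * k) (by omega)
      (fun j _ => by omega) f
  have hP1 : (∏ i ∈ univ.filter (fun i : Fin n => (i : ℕ) < k),
      ∏ j ∈ univ.filter (fun j : Fin n => k ≤ (j : ℕ) ∧ (j : ℕ) < n - k), (1 - h i * (h j)⁻¹)) =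
      ∏ a : Fin k, ∏ m : Fin (n - 2 * k), (1 - exp (I * θ a - X a) * (t m)⁻¹) := by
    rw [Fin.prod_filter_eq_prod_add (· < k) 0 k (by omega) fun j _ => by omega]
    refine prod_congr rfl fun a _ => ?_
    rw [prod_middle, hh1 _ a.isLt]
    refine prod_congr rfl fun m _ => ?_
    rw [hh2 _ (by simp) (by simp; omega)]
    simp
  have hP2 : (∏ i ∈ univ.filter (fun i : Fin n => k ≤ (i : ℕ) ∧ (i : ℕ) < n - k),
      ∏ j ∈ univ.filter (fun j : Fin n => n - k ≤ (j : ℕ)), (1 - h i * (h j)⁻¹)) =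
      ∏ a : Fin k, ∏ m : Fin (n - 2 * k), (1 - t m * conj (exp (I * θ a - X a))) := by
    rw [prod_comm,
      Fin.prod_filter_eq_prod_add (n - k ≤ ·) (n - k) k (by omega) fun j _ => by omega]
    refine prod_congr rfl fun a _ => ?_
    rw [prod_middle, hh3 _ (by simp), conj_exp_I_mul_sub]
    refine prod_congr rfl fun m _ => ?_
    rw [hh2 _ (by simp) (by simp; omega)]
    simp
  refine ⟨∏ a : Fin k, ∏ m : Fin (n - 2 * k), normSq (1 - exp (I * θ a - X a) * (t m)⁻¹),
    prod_pos fun a _ => prod_pos fun m _ =>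
      normSq_one_sub_mul_inv_pos (norm_exp_I_mul_sub_ne_one (hX a)) (ht m), ?_⟩
  rw [hP1, hP2, ← prod_mul_distrib]
  push_cast
  refine prod_congr rfl fun a _ => ?_
  rw [← prod_mul_distrib]
  exact prod_congr rfl fun m _ => mul_one_sub_mul_conj_eq_normSq (ht m)
end
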